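/- Let (B₁,B₂) ∈ Z and set A₀ = J·B₁ᵀ·J, A₁ = B₁, A₂ = J·B₂ᵀ·J, A₃ = B₂. Then det A_i = 0 for all i, and A₀·A₁ = A₁·A₂ = A₂·A₃ = A₃·A₀ = 0 (the zero 2×2 matrix). Moreover the linear map (B₁,B₂) ↦ (J·B₁ᵀ·J, B₁, J·B₂ᵀ·J, B₂) from M₂(ℂ)² to M₂(ℂ)⁴ is injective; in particular it maps Z injectively into the Kashiwara–Saito variety Z_ks. -/

import Mathlib

open Matrix

/-- The matrix `J = !![0,-1; 1,0]`. -/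
def MJ : Matrix (Fin 2) (Fin 2) ℂ := !![0, -1; 1, 0]

/-- The matrix `T = !![0,1; 1,0]`. -/
def MT : Matrix (Fin 2) (Fin 2) ℂ := !![0, 1; 1, 0]

/-- The variety `Z` of pairs of 2×2 matrices. -/
def Z : Set (Matrix (Fin 2) (Fin 2) ℂ × Matrix (Fin 2) (Fin 2) ℂ) :=
  {p | p.1.det = 0 ∧ p.2.det = 0 ∧ p.1 * MJ * p.2ᵀ = 0 ∧ p.2ᵀ * MT * p.1 = 0}

/-- The Kashiwara–Saito variety `Z_ks ⊆ M₂(ℂ)⁴`: quadruples `(A₀,A₁,A₂,A₃)` with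
`det A_i = 0` and `A_i·A_{i+1} = 0` for `i ∈ ℤ/4`. -/
def Zks : Set (Matrix (Fin 2) (Fin 2) ℂ × Matrix (Fin 2) (Fin 2) ℂ ×
    Matrix (Fin 2) (Fin 2) ℂ × Matrix (Fin 2) (Fin 2) ℂ) :=
  {q | q.1.det = 0 ∧ q.2.1.det = 0 ∧ q.2.2.1.det = 0 ∧ q.2.2.2.det = 0 ∧
    q.1 * q.2.1 = 0 ∧ q.2.1 * q.2.2.1 = 0 ∧ q.2.2.1 * q.2.2.2 = 0 ∧ q.2.2.2 * q.1 = 0}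

/-- The embedding `(B₁,B₂) ↦ (J·B₁ᵀ·J, B₁, J·B₂ᵀ·J, B₂)`. -/
noncomputable def psi (p : Matrix (Fin 2) (Fin 2) ℂ × Matrix (Fin 2) (Fin 2) ℂ) :
    Matrix (Fin 2) (Fin 2) ℂ × Matrix (Fin 2) (Fin 2) ℂ ×
      Matrix (Fin 2) (Fin 2) ℂ × Matrix (Fin 2) (Fin 2) ℂ :=
  (MJ * p.1ᵀ * MJ, p.1, MJ * p.2ᵀ * MJ, p.2)

/-! For 2×2 matrices, conjugating the transpose by `J` gives minus the adjugate; hence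
`J·Bᵀ·J` has the same determinant as `B`, and `(J·Bᵀ·J)·B = -det B • 1 = 0`. The two
remaining products reduce to the relation `B₁·J·B₂ᵀ = 0` (and its transpose, as `Jᵀ = -J`);
injectivity holds because `B₁` and `B₂` are themselves coordinates of the image. -/

section SkewForm

variable {n R : Type*} [Fintype n] [CommRing R] {J A B : Matrix n n R}

theorem mul_mul_transpose_eq_zero_swap (hJ : Jᵀ = -J) (h : A * J * Bᵀ = 0) :
    B * J * Aᵀ = 0 := by
  have : (A * J * Bᵀ)ᵀ = -(B * J * Aᵀ) := by
    rw [transpose_mul, transpose_mul, hJ, transpose_transpose]; noncomm_ring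
  rwa [h, transpose_zero, zero_eq_neg] at this

theorem mul_mul_transpose_mul_eq_zero (h : A * J * Bᵀ = 0) : A * (J * Bᵀ * J) = 0 := by
  rw [← Matrix.mul_assoc, ← Matrix.mul_assoc, h, Matrix.zero_mul]

end SkewForm

theorem fin_two_mul_transpose_mul_eq_neg_adjugate {R : Type*} [CommRing R]
    (B : Matrix (Fin 2) (Fin 2) R) :
    !![0, -1; 1, 0] * Bᵀ * !![0, -1; 1, 0] = -B.adjugate := by
  rw [adjugate_fin_two]
  ext i j; fin_cases i <;> fin_cases j <;> simp [Matrix.mul_apply, vecMul, dotProduct]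

theorem MJ_transpose : MJᵀ = -MJ := by
  ext i j; fin_cases i <;> fin_cases j <;> simp [MJ]

theorem MJ_mul_transpose_mul_MJ (B : Matrix (Fin 2) (Fin 2) ℂ) :
    MJ * Bᵀ * MJ = -B.adjugate :=
  fin_two_mul_transpose_mul_eq_neg_adjugate B

theorem det_MJ_mul_transpose_mul_MJ (B : Matrix (Fin 2) (Fin 2) ℂ) :
    (MJ * Bᵀ * MJ).det = B.det := by
  simp [MJ_mul_transpose_mul_MJ, det_neg, det_adjugate]

theorem MJ_mul_transpose_mul_MJ_mul_self {B : Matrix (Fin 2) (Fin 2) ℂ} (h : B.det = 0) :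
    MJ * Bᵀ * MJ * B = 0 := by
  simp [MJ_mul_transpose_mul_MJ, adjugate_mul, h]

theorem psi_injective : Function.Injective psi := fun _ _ h =>
  Prod.ext (congrArg (fun x => x.2.1) h) (congrArg (fun x => x.2.2.2) h)

theorem psi_mem_Zks {p : Matrix (Fin 2) (Fin 2) ℂ × Matrix (Fin 2) (Fin 2) ℂ} (hp : p ∈ Z) :
    psi p ∈ Zks := by
  obtain ⟨h₁, h₂, h₁₂, -⟩ := hp
  exact ⟨(det_MJ_mul_transpose_mul_MJ _).trans h₁, h₁,
    (det_MJ_mul_transpose_mul_MJ _).trans h₂, h₂,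
    MJ_mul_transpose_mul_MJ_mul_self h₁, mul_mul_transpose_mul_eq_zero h₁₂,
    MJ_mul_transpose_mul_MJ_mul_self h₂,
    mul_mul_transpose_mul_eq_zero (mul_mul_transpose_eq_zero_swap MJ_transpose h₁₂)⟩

theorem stmt8 :
    (∀ B₁ B₂ : Matrix (Fin 2) (Fin 2) ℂ, (B₁, B₂) ∈ Z →
      (MJ * B₁ᵀ * MJ).det = 0 ∧ B₁.det = 0 ∧ (MJ * B₂ᵀ * MJ).det = 0 ∧ B₂.det = 0 ∧
      (MJ * B₁ᵀ * MJ) * B₁ = 0 ∧ B₁ * (MJ * B₂ᵀ * MJ) = 0 ∧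
      (MJ * B₂ᵀ * MJ) * B₂ = 0 ∧ B₂ * (MJ * B₁ᵀ * MJ) = 0) ∧
    Function.Injective psi ∧
    (∀ p ∈ Z, psi p ∈ Zks) :=
  ⟨fun _ _ h => by simpa only [psi, Zks, Set.mem_ofPred_eq] using psi_mem_Zks h,
    psi_injective, fun _ => psi_mem_Zks⟩
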